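/- For the polynomial p(z_1,z_2,z_3) = (1/5)(z_1² + z_2² + z_3² - 2z_1z_2 - 2z_1z_3 - 2z_2z_3), the supremum of |p(ζ)| over ζ in the 3-torus 𝕋³ equals 1. -/

import Mathlib

/-- The Kaijser–Varopoulos polynomial
`p(z) = (1/5)(z₁²+z₂²+z₃²-2z₁z₂-2z₁z₃-2z₂z₃)`. -/
noncomputable def pKV (z : Fin 3 → ℂ) : ℂ :=
  (1/5 : ℂ) * (z 0 ^ 2 + z 1 ^ 2 + z 2 ^ 2
    - 2 * z 0 * z 1 - 2 * z 0 * z 2 - 2 * z 1 * z 2)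

theorem keyPQ (P Q : ℝ) (hP : -1 ≤ P) (hP1 : P ≤ 1) (hQ : -1 ≤ Q) (hQ1 : Q ≤ 1) :
    (1-2*P)^2*(1+P)*(1+Q) ≤ (3+Q*(1-P)-P^2)^2 := by
  have p1 : (0:ℝ) ≤ 1-P := by linarith
  have p2 : (0:ℝ) ≤ 1+P := by linarith
  have q1 : (0:ℝ) ≤ 1-Q := by linarith
  have q2 : (0:ℝ) ≤ 1+Q := by linarith
  nlinarith [mul_nonneg p1 q1, mul_nonneg p1 q2, mul_nonneg p2 q1, mul_nonneg p2 q2,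
    mul_nonneg (mul_nonneg p1 p1) q1, mul_nonneg (mul_nonneg p1 p1) q2,
    mul_nonneg (mul_nonneg p1 p2) q1, mul_nonneg (mul_nonneg p1 p2) q2,
    mul_nonneg (mul_nonneg p2 p2) q1, mul_nonneg (mul_nonneg p2 p2) q2,
    mul_nonneg (mul_nonneg p1 q1) q2, mul_nonneg (mul_nonneg p2 q1) q2,
    mul_nonneg (mul_nonneg p1 p2) (mul_nonneg q1 q2),
    sq_nonneg ((1-P)*(1-Q)), sq_nonneg ((1-P)*(1+Q)), sq_nonneg (P-Q), sq_nonneg (P+Q),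
    mul_nonneg (mul_nonneg p1 p1) (sq_nonneg Q), mul_nonneg q1 (sq_nonneg P),
    mul_nonneg q2 (sq_nonneg P), mul_nonneg p1 (sq_nonneg Q), mul_nonneg p2 (sq_nonneg Q)]

theorem keyg (P Q S : ℝ) (hP : -1 ≤ P) (hP1 : P ≤ 1) (hQ : -1 ≤ Q) (hQ1 : Q ≤ 1)
    (hS : S^2 = (1+P)*(1+Q)) : P^2 + P*Q - 2*P*S + S - Q - 3 ≤ 0 := by
  have h0 : (0:ℝ) ≤ 3+Q*(1-P)-P^2 := by nlinarith [sq_nonneg P, sq_nonneg (1-P)]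
  have hsq : ((1-2*P)*S)^2 ≤ (3+Q*(1-P)-P^2)^2 := by
    have h := keyPQ P Q hP hP1 hQ hQ1
    calc ((1-2*P)*S)^2 = (1-2*P)^2*(1+P)*(1+Q) := by rw [mul_pow, hS]; ring
    _ ≤ (3+Q*(1-P)-P^2)^2 := h
  have hA : (1-2*P)*S ≤ 3+Q*(1-P)-P^2 := by nlinarith [hsq, h0]
  nlinarith [hA]

theorem key4 (a1 b1 a2 b2 : ℝ) (h1 : a1^2+b1^2=1) (h2 : a2^2+b2^2=1) :
    (1 + a1^2-b1^2 + a2^2-b2^2 - 2*(a1*a2-b1*b2) - 2*a1 - 2*a2)^2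
    + (2*a1*b1 + 2*a2*b2 - 2*(a1*b2+a2*b1) - 2*b1 - 2*b2)^2 ≤ 25 := by
  have hP1 : a1*a2 + b1*b2 ≤ 1 := by nlinarith [sq_nonneg (a1-a2), sq_nonneg (b1-b2)]
  have hP : -1 ≤ a1*a2 + b1*b2 := by nlinarith [sq_nonneg (a1+a2), sq_nonneg (b1+b2)]
  have hQ1 : a1*a2 - b1*b2 ≤ 1 := by nlinarith [sq_nonneg (a1-a2), sq_nonneg (b1+b2)]
  have hQ : -1 ≤ a1*a2 - b1*b2 := by nlinarith [sq_nonneg (a1+a2), sq_nonneg (b1-b2)]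
  have hS : (a1+a2)^2 = (1+(a1*a2 + b1*b2))*(1+(a1*a2 - b1*b2)) := by
    linear_combination (1-a2^2)*h1 + b1^2*h2
  have hg := keyg (a1*a2 + b1*b2) (a1*a2 - b1*b2) (a1+a2) hP hP1 hQ hQ1 hS
  have hid : (1 + a1^2-b1^2 + a2^2-b2^2 - 2*(a1*a2-b1*b2) - 2*a1 - 2*a2)^2
    + (2*a1*b1 + 2*a2*b2 - 2*(a1*b2+a2*b1) - 2*b1 - 2*b2)^2
    = 25 + 4*((a1*a2 + b1*b2)^2 + (a1*a2 + b1*b2)*(a1*a2 - b1*b2)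
      - 2*(a1*a2 + b1*b2)*(a1+a2) + (a1+a2) - (a1*a2 - b1*b2) - 3) := by
    linear_combination (3 + 6*b2^2 + 12*a2 + 2*a2^2 - 4*b1*b2 + b1^2 - 4*a1 - 4*a1*a2 + a1^2)*h1
      + (9 + b2^2 - 4*a2 + a2^2 - 4*b1*b2 + 12*a1 - 4*a1*a2 - 4*a1^2)*h2
  linarith [hid, hg]

theorem normE_le (w v : ℂ) (hw : ‖w‖ = 1) (hv : ‖v‖ = 1) :
    ‖w^2 + v^2 + 1 - 2*w*v - 2*w - 2*v‖ ≤ 5 := by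
  have h1 : w.re^2 + w.im^2 = 1 := by
    have h := Complex.sq_norm w
    rw [hw, Complex.normSq_apply] at h
    nlinarith [h]
  have h2 : v.re^2 + v.im^2 = 1 := by
    have h := Complex.sq_norm v
    rw [hv, Complex.normSq_apply] at h
    nlinarith [h]
  have hsq : (‖w^2 + v^2 + 1 - 2*w*v - 2*w - 2*v‖)^2 ≤ 25 := by
    rw [Complex.sq_norm, Complex.normSq_apply]
    have hkey := key4 w.re w.im v.re v.im h1 h2
    simp only [Complex.sub_re, Complex.sub_im, Complex.add_re, Complex.add_im,
      Complex.mul_re, Complex.mul_im, Complex.one_re, Complex.one_im, pow_two,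
      Complex.re_ofNat, Complex.im_ofNat]
    nlinarith [hkey]
  nlinarith [hsq, norm_nonneg (w^2 + v^2 + 1 - 2*w*v - 2*w - 2*v)]

theorem stmt_6 :
    IsGreatest ((fun ζ : Fin 3 → ℂ => ‖pKV ζ‖) ''
      {ζ | ∀ k, ‖ζ k‖ = 1}) 1 := by
  constructor
  · refine ⟨![1, 1, -1], ?_, ?_⟩
    · intro k
      fin_cases k <;> simp
    · show ‖pKV ![1, 1, -1]‖ = 1
      have : pKV ![1, 1, -1] = 1 := by
        simp [pKV]
        norm_num
      rw [this, norm_one]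
  · rintro x ⟨ζ, hζ, rfl⟩
    show ‖pKV ζ‖ ≤ 1
    set w : ℂ := ζ 0 * (starRingEnd ℂ) (ζ 2) with hwdef
    set v : ℂ := ζ 1 * (starRingEnd ℂ) (ζ 2) with hvdef
    have hz2 : ζ 2 * (starRingEnd ℂ) (ζ 2) = 1 := by
      rw [Complex.mul_conj]
      norm_cast
      rw [Complex.normSq_eq_norm_sq, hζ 2]
      norm_num
    have hw : ‖w‖ = 1 := by
      rw [hwdef, norm_mul, Complex.norm_conj, hζ 0, hζ 2, one_mul]
    have hv : ‖v‖ = 1 := by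
      rw [hvdef, norm_mul, Complex.norm_conj, hζ 1, hζ 2, one_mul]
    have hfac : pKV ζ = (1/5 : ℂ) * (ζ 2)^2 * (w^2 + v^2 + 1 - 2*w*v - 2*w - 2*v) := by
      rw [pKV, hwdef, hvdef]
      linear_combination ((2/5 : ℂ)*(ζ 0 + ζ 1)*(ζ 2)
        - (1/5 : ℂ)*((ζ 0)^2 + (ζ 1)^2 - 2*(ζ 0)*(ζ 1))*((ζ 2)*(starRingEnd ℂ) (ζ 2) + 1)) * hz2
    rw [hfac, norm_mul, norm_mul, norm_pow, hζ 2]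
    have hE := normE_le w v hw hv
    simp only [one_pow, mul_one]
    rw [norm_div, norm_one]
    simp only [Complex.norm_ofNat]
    calc 1/5 * ‖w^2 + v^2 + 1 - 2*w*v - 2*w - 2*v‖ ≤ 1/5 * 5 := by
          apply mul_le_mul_of_nonneg_left hE; norm_num
    _ = 1 := by norm_num
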